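/- arXiv:1210.4101 — 2 statements merged into one kernel-verified Lean document; each statement's English description precedes it below -/
import Mathlib

section
/- Let k ≥ 2 and n ≥ 2 be integers, and let α be a real number with Ψ_k(α) = 0 and 2(1 − 2^{−k}) < α < 2. Then there is no integer m ≥ 3 such that m = f_k(α) · α^{n−1}. -/
/-- Auxiliary sequence: `gfib k i` is the `k`-generalized Fibonacci sequence re-indexed so that
index `i` corresponds to `n = i - (k - 2)`; i.e. `gfib k i = 0` for `i < k - 1`,
`gfib k (k-1) = 1`, and each later term is the sum of the `k` preceding terms. -/
def gfib (k : ℕ) (i : ℕ) : ℕ :=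
  if _h1 : k < 2 then 0
  else if _h2 : i + 1 < k then 0
  else if _h3 : i + 1 = k then 1
  else ∑ j ∈ Finset.range k, gfib k (i - 1 - j)
decreasing_by omega

/-- `genFib k n` is the `n`-th `k`-generalized Fibonacci number `F_n^{(k)}` (for `n ≥ 0`):
`F_0 = ⋯ = 0`, `F_1 = 1` and `F_n = F_{n-1} + ⋯ + F_{n-k}`. -/
def genFib (k : ℕ) (n : ℕ) : ℕ := gfib k (n + k - 2)

/-- `P m`: the largest prime factor of `m`, with `P 0 = P 1 = 1`. -/
def largestPrimeFactor (m : ℕ) : ℕ := max 1 (m.primeFactors.sup id)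

/-- The characteristic polynomial `Ψ_k(x) = x^k - x^{k-1} - ⋯ - x - 1` as a function. -/
def psiFun {R : Type*} [CommRing R] (k : ℕ) (x : R) : R := x ^ k - ∑ i ∈ Finset.range k, x ^ i

/-- `f_k(x) = (x - 1)/(2 + (k+1)(x-2))`. -/
noncomputable def fk (k : ℕ) (x : ℝ) : ℝ := (x - 1) / (2 + (k + 1) * (x - 2))

/-!
Clearing the denominator of `f_k(α)` with `α^k (2 - α) = 1` turns `m = f_k(α) α^{n-1}` into the
relation `m (2α^k - (k+1)) = α^{n-1} (α^k - 1)` with rational coefficients. As an algebraic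
integer strictly between `1` and `2`, `α` is irrational, so it has a conjugate `β ≠ α`; `β` is
again a root of `Ψ_k` and satisfies the same relation. All roots of `Ψ_k` other than `α` lie in
the open unit disc, so the right-hand side at `β` has modulus `< 2`, while the left-hand side has
modulus `> m (k - 1) ≥ 2`.
-/

open Finset Polynomial

theorem map_psiFun {k : ℕ} {R S : Type*} [CommRing R] [CommRing S] (f : R →+* S) (x : R) :
    f (psiFun k x) = psiFun k (f x) := by
  simp [psiFun]

theorem pow_mul_two_sub_eq_one_sub_mul_psiFun {k : ℕ} {R : Type*} [CommRing R] (x : R) :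
    x ^ k * (2 - x) = 1 - (x - 1) * psiFun k x := by
  have := geom_sum_mul x k
  unfold psiFun
  linear_combination -this

theorem psiFun_pos_of_lt {k : ℕ} {R : Type*} [Field R] [LinearOrder R] [IsStrictOrderedRing R]
    {x y : R} (hx : 0 < x) (hxy : x < y) (hroot : psiFun k x = 0) :
    0 < psiFun k y := by
  have hk : k ≠ 0 := by
    rintro rfl
    simp [psiFun] at hroot
  set t := y / x
  have ht : 1 < t := (one_lt_div hx).2 hxy
  have hy : y = t * x := (div_mul_cancel₀ y hx.ne').symm
  have hsum : ∑ i ∈ range k, y ^ i < t ^ k * ∑ i ∈ range k, x ^ i := by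
    rw [mul_sum]
    refine sum_lt_sum_of_nonempty (nonempty_range_iff.2 hk) fun i hi ↦ ?_
    rw [hy, mul_pow]
    exact mul_lt_mul_of_pos_right (pow_lt_pow_right₀ ht (mem_range.1 hi)) (pow_pos hx i)
  rw [psiFun, sub_eq_zero] at hroot
  rw [psiFun, sub_pos]
  calc ∑ i ∈ range k, y ^ i < t ^ k * ∑ i ∈ range k, x ^ i := hsum
    _ = y ^ k := by rw [← hroot, hy, mul_pow]

theorem eq_of_psiFun_eq_zero {k : ℕ} {R : Type*} [Field R] [LinearOrder R] [IsStrictOrderedRing R]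
    {x y : R} (hx : 0 < x) (hy : 0 < y) (hxr : psiFun k x = 0)
    (hyr : psiFun k y = 0) : x = y := by
  rcases lt_trichotomy x y with hxy | hxy | hxy
  · exact absurd hyr (psiFun_pos_of_lt hx hxy hxr).ne'
  · exact hxy
  · exact absurd hxr (psiFun_pos_of_lt hy hxy hyr).ne'

theorem Complex.eq_norm_of_norm_sub_le {a : ℝ} (ha : 0 < a) {z : ℂ} (h : ‖(a : ℂ) - z‖ ≤ a - ‖z‖) :
    z = ‖z‖ := by
  have hsq : ‖(a : ℂ) - z‖ ^ 2 = a ^ 2 - 2 * a * z.re + ‖z‖ ^ 2 := by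
    rw [Complex.sq_norm, Complex.sq_norm, Complex.normSq_apply, Complex.normSq_apply]
    simp only [Complex.sub_re, Complex.sub_im, Complex.ofReal_re, Complex.ofReal_im]
    ring
  have hre : z.re = ‖z‖ := by
    have := pow_le_pow_left₀ (norm_nonneg _) h 2
    nlinarith [re_le_norm z]
  have him : z.im = 0 := abs_re_eq_norm.1 (by rw [hre, abs_norm])
  exact ext (by simp [hre]) (by simp [him])

theorem norm_lt_one_of_psiFun_eq_zero {k : ℕ} {α : ℝ} (hα : 0 < α)
    (hαr : psiFun k α = 0) {β : ℂ} (hβr : psiFun k β = 0) (hne : β ≠ α) : ‖β‖ < 1 := by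
  -- For `r = ‖β‖ ≥ 1`, the triangle inequality in `β^k = ∑ β^i` gives `r^k (2 - r) ≥ 1`, and in
  -- `β^k (2 - β) = 1` the reverse; equality forces `β = r`, a second positive root of `Ψ_k`.
  by_contra! hβ1
  set r := ‖β‖ with hr
  have hrk : 0 < r ^ k := pow_pos (by linarith) k
  have hψr : psiFun k r ≤ 0 := by
    rw [psiFun, sub_nonpos]
    calc r ^ k = ‖∑ i ∈ range k, β ^ i‖ := by
          rw [hr, ← norm_pow, sub_eq_zero.1 hβr]
      _ ≤ ∑ i ∈ range k, r ^ i := by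
          simpa only [norm_pow] using norm_sum_le (range k) (β ^ ·)
  have hβk : r ^ k * ‖2 - β‖ = 1 := by
    rw [← norm_pow, ← norm_mul, pow_mul_two_sub_eq_one_sub_mul_psiFun, hβr]
    simp
  have hrk2 : 1 ≤ r ^ k * (2 - r) := by
    rw [pow_mul_two_sub_eq_one_sub_mul_psiFun]
    nlinarith
  have hβreal : β = r := by
    refine Complex.eq_norm_of_norm_sub_le two_pos ?_
    push_cast
    exact le_of_mul_le_mul_left (by linarith) hrk
  have hrα : r = α := by
    refine eq_of_psiFun_eq_zero (by linarith) hα ?_ hαr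
    rw [hβreal, ← Complex.ofRealHom_eq_coe, ← map_psiFun] at hβr
    exact Complex.ofReal_eq_zero.1 hβr
  exact hne (hβreal.trans (congrArg _ hrα))

section Polynomial

variable (R : Type*) [CommRing R]

noncomputable def psiPoly (k : ℕ) : R[X] := X ^ k - ∑ i ∈ range k, X ^ i

variable {R}

theorem monic_psiPoly (k : ℕ) : (psiPoly R k).Monic := by
  apply monic_X_pow_sub
  apply lt_of_le_of_lt (degree_sum_le _ _)
  rw [Finset.sup_lt_iff (by exact_mod_cast WithBot.bot_lt_coe k)]
  exact fun i hi ↦ (degree_X_pow_le i).trans_lt (by exact_mod_cast mem_range.1 hi)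

@[simp]
theorem aeval_psiPoly {A : Type*} [CommRing A] [Algebra R A] (k : ℕ) (x : A) :
    aeval x (psiPoly R k) = psiFun k x := by
  simp [psiPoly, psiFun]

theorem isIntegral_of_psiFun_eq_zero {A : Type*} [CommRing A] [Algebra R A]
    {k : ℕ} {x : A} (hx : psiFun k x = 0) : IsIntegral R x :=
  ⟨psiPoly R k, monic_psiPoly k, by rwa [← aeval_def, aeval_psiPoly]⟩

end Polynomial

theorem irrational_of_psiFun_eq_zero {k : ℕ} {α : ℝ} (hroot : psiFun k α = 0)
    (h1 : 1 < α) (h2 : α < 2) : Irrational α := by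
  rintro ⟨q, rfl⟩
  have hq : psiFun k q = 0 := by
    have : ((psiFun k q : ℚ) : ℝ) = psiFun k (q : ℝ) := map_psiFun (Rat.castHom ℝ) q
    exact_mod_cast this.trans hroot
  obtain ⟨z, rfl⟩ :=
    IsIntegrallyClosed.isIntegral_iff.1 (isIntegral_of_psiFun_eq_zero (R := ℤ) hq)
  simp only [algebraMap_int_eq, eq_intCast, Rat.cast_intCast] at h1 h2
  have h1' : (1 : ℤ) < z := by exact_mod_cast h1
  have h2' : z < 2 := by exact_mod_cast h2
  omega

theorem Irrational.ofReal_notMem_bot {x : ℝ} (hx : Irrational x) :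
    (x : ℂ) ∉ (⊥ : Subalgebra ℚ ℂ) := by
  rw [Algebra.mem_bot]
  rintro ⟨q, hq⟩
  rw [eq_ratCast, ← Complex.ofReal_ratCast, Complex.ofReal_inj] at hq
  exact hx ⟨q, hq⟩

theorem IsConjRoot.aeval_eq_zero_of_aeval_eq_zero {K A : Type*} [Field K] [Ring A] [Algebra K A]
    {x y : A} (h : IsConjRoot K x y) {p : K[X]} (hp : aeval x p = 0) : aeval y p = 0 :=
  aeval_eq_zero_of_dvd_aeval_eq_zero (minpoly.dvd K x hp) h.aeval_eq_zero

theorem exists_ne_isConjRoot_of_notMem_bot {K L : Type*} [Field K] [CharZero K] [Field L]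
    [IsAlgClosed L] [Algebra K L] {x : L} (hx : IsIntegral K x) (hbot : x ∉ (⊥ : Subalgebra K L)) :
    ∃ y : L, x ≠ y ∧ IsConjRoot K x y :=
  (notMem_iff_exists_ne_and_isConjRoot (minpoly.irreducible hx).separable
    (IsAlgClosed.splits _)).1 hbot

theorem mul_eq_of_eq_fk_mul_pow {k j : ℕ} {α : ℝ} (hroot : psiFun k α = 0) {m : ℝ}
    (hm0 : m ≠ 0) (hm : m = fk k α * α ^ j) :
    m * (2 * α ^ k - (k + 1)) = α ^ j * (α ^ k - 1) := by
  have hD : 2 + ((k : ℝ) + 1) * (α - 2) ≠ 0 := by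
    intro hD
    rw [fk, hD, div_zero, zero_mul] at hm
    exact hm0 hm
  have hmD : m * (2 + ((k : ℝ) + 1) * (α - 2)) = (α - 1) * α ^ j := by
    rw [hm, fk]
    field_simp
  have hα := pow_mul_two_sub_eq_one_sub_mul_psiFun (k := k) α
  rw [hroot, mul_zero, sub_zero] at hα
  linear_combination α ^ k * hmD + (m * (k + 1) - α ^ j) * hα

theorem mul_ne_pow_mul_of_norm_lt_one {β : ℂ} (hβ : ‖β‖ < 1) {k : ℕ} (hk : 2 ≤ k) {m : ℝ}
    (hm : 2 ≤ m) (j : ℕ) : m * (2 * β ^ k - (k + 1)) ≠ β ^ j * (β ^ k - 1) := by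
  intro h
  set s := ‖β‖ with hs
  have hs0 : 0 ≤ s := norm_nonneg β
  have hsk : s ^ k < 1 := pow_lt_one₀ hs0 hβ (by omega)
  have hk' : (2 : ℝ) ≤ k := by exact_mod_cast hk
  have hlhs : m * ((k + 1) - 2 * s ^ k) ≤ ‖(m : ℂ) * (2 * β ^ k - (k + 1))‖ := by
    rw [norm_mul, Complex.norm_real, Real.norm_of_nonneg (by linarith), norm_sub_rev]
    gcongr
    calc (k + 1 : ℝ) - 2 * s ^ k = ‖((k + 1 : ℝ) : ℂ)‖ - ‖2 * β ^ k‖ := by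
          rw [Complex.norm_real, Real.norm_of_nonneg (by positivity), norm_mul, norm_pow, ← hs]
          norm_num
      _ ≤ ‖(k + 1 : ℂ) - 2 * β ^ k‖ := by
          push_cast
          exact norm_sub_norm_le _ _
  have hrhs : ‖β ^ j * (β ^ k - 1)‖ ≤ s ^ k + 1 := by
    rw [norm_mul, norm_pow]
    calc s ^ j * ‖β ^ k - 1‖ ≤ 1 * (s ^ k + 1) := by
          gcongr
          · exact pow_le_one₀ hs0 hβ.le
          · simpa using norm_sub_le (β ^ k) 1
      _ = s ^ k + 1 := one_mul _
  rw [h] at hlhs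
  nlinarith

theorem no_integer_eq_fk_mul_pow_general (k n : ℕ) (hk : 2 ≤ k) (α : ℝ)
    (hroot : psiFun k α = 0) (hα₁ : 2 * (1 - 2 ^ (-(k : ℝ))) < α) (hα₂ : α < 2) :
    ¬∃ m : ℤ, 3 ≤ m ∧ (m : ℝ) = fk k α * α ^ (n - 1) := by
  rintro ⟨m, hm3, hm⟩
  have hα : 1 < α := by
    have : (2 : ℝ) ^ (-(k : ℝ)) ≤ 2 ^ (-1 : ℝ) :=
      Real.rpow_le_rpow_of_exponent_le one_le_two (by norm_cast; omega)
    rw [Real.rpow_neg_one] at this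
    linarith
  have hm2 : (2 : ℝ) ≤ m := by exact_mod_cast hm3.trans' (by norm_num)
  have hrel := mul_eq_of_eq_fk_mul_pow hroot (by positivity) hm
  have hαroot : psiFun k (α : ℂ) = 0 := by
    rw [← Complex.ofRealHom_eq_coe, ← map_psiFun, hroot, map_zero]
  obtain ⟨β, hne, hconj⟩ := exists_ne_isConjRoot_of_notMem_bot
    (isIntegral_of_psiFun_eq_zero (R := ℚ) hαroot)
    (irrational_of_psiFun_eq_zero hroot hα hα₂).ofReal_notMem_bot
  have hβroot : psiFun k β = 0 := by
    simpa using hconj.aeval_eq_zero_of_aeval_eq_zero (p := psiPoly ℚ k) (by simpa using hαroot)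
  have hβrel : (m : ℂ) * (2 * β ^ k - (k + 1)) = β ^ (n - 1) * (β ^ k - 1) := by
    have := hconj.aeval_eq_zero_of_aeval_eq_zero
      (p := (m : ℚ[X]) * (2 * X ^ k - ((k : ℚ[X]) + 1)) - X ^ (n - 1) * (X ^ k - 1))
      (by simpa [sub_eq_zero, map_ofNat] using congrArg Complex.ofReal hrel)
    simpa [sub_eq_zero, map_ofNat] using this
  exact mul_ne_pow_mul_of_norm_lt_one
    (norm_lt_one_of_psiFun_eq_zero (by linarith) hroot hβroot hne.symm) hk hm2 (n - 1)
    (by exact_mod_cast hβrel)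

/-- For `k ≥ 2`, `n ≥ 2` and the real root `α` of `Ψ_k` with `2(1 - 2^{-k}) < α < 2`,
no integer `m ≥ 3` satisfies `m = f_k(α) α^{n-1}`. -/
theorem no_integer_eq_fk_mul_pow (k n : ℕ) (hk : 2 ≤ k) (hn : 2 ≤ n) (α : ℝ)
    (hroot : psiFun k α = 0) (hα₁ : 2 * (1 - 2 ^ (-(k : ℝ))) < α) (hα₂ : α < 2) :
    ¬∃ m : ℤ, 3 ≤ m ∧ (m : ℝ) = fk k α * α ^ (n - 1) :=
  no_integer_eq_fk_mul_pow_general k n hk α hroot hα₁ hα₂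
end

section
/- Let k ≥ 2 and n be integers with k + 2 ≤ n < 2^{k/2}. Then |F_n^{(k)} − 2^{n−2}| < 12 · 2^{n−2} / 2^{k/2}; equivalently, |F_n^{(k)} / 2^{n−2} − 1| < 12 / 2^{k/2}. -/
/-! The two-term recurrence `F_{n+k+1} + F_n = 2 F_{n+k}` and `F_n = 2^{n-2}` for `2 ≤ n ≤ k + 1`
show that the deficit `2^{n-2} - F_n` is nonnegative and, writing `n = k + 1 + m`, at most
`m · 2^m`: each step doubles it and adds `F_{m+1} ≤ 2^m`. Since `m < n < 2^{k/2}`, we get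
`m · 2^m · 2^{k/2} < 2^{k+m} = 2 · 2^{n-2}`. -/

section gfib

variable {k : ℕ}

lemma gfib_of_lt {i : ℕ} (h : i + 1 < k) : gfib k i = 0 := by
  rw [gfib, dif_neg (by omega), dif_pos h]

lemma gfib_sub_one (hk : 2 ≤ k) : gfib k (k - 1) = 1 := by
  rw [gfib, dif_neg (by omega), dif_neg (by omega), dif_pos (by omega)]

lemma gfib_eq_sum (hk : 2 ≤ k) {i : ℕ} (h : k ≤ i) :
    gfib k i = ∑ j ∈ Finset.range k, gfib k (i - 1 - j) := by
  rw [gfib, dif_neg (by omega), dif_neg (by omega), dif_neg (by omega)]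

lemma gfib_self (hk : 2 ≤ k) : gfib k k = 1 := by
  rw [gfib_eq_sum hk le_rfl, Finset.sum_eq_single_of_mem 0 (Finset.mem_range.2 (by omega))]
  · simpa using gfib_sub_one hk
  · intro j hj hj0
    exact gfib_of_lt (by rw [Finset.mem_range] at hj; omega)

lemma gfib_le_one (hk : 2 ≤ k) {i : ℕ} (hi : i ≤ k) : gfib k i ≤ 1 := by
  rcases lt_trichotomy (i + 1) k with h | h | h
  · simp [gfib_of_lt h]
  · rw [show i = k - 1 by omega, gfib_sub_one hk]
  · rw [show i = k by omega, gfib_self hk]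

/-- Subtracting consecutive instances of the `k`-term recurrence leaves two terms. -/
lemma gfib_add_gfib (hk : 2 ≤ k) (i : ℕ) :
    gfib k (i + k + 1) + gfib k i = 2 * gfib k (i + k) := by
  obtain ⟨l, rfl⟩ : ∃ l, k = l + 1 := ⟨k - 1, by omega⟩
  have hsucc : gfib (l + 1) (i + l + 1 + 1) =
      gfib (l + 1) (i + l + 1) + ∑ j ∈ Finset.range l, gfib (l + 1) (i + l - j) := by
    rw [gfib_eq_sum hk (by omega), Finset.sum_range_succ', add_comm]
    exact congrArg₂ (· + ·) rfl (Finset.sum_congr rfl fun j _ => congrArg _ (by omega))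
  have hself : gfib (l + 1) (i + l + 1) =
      ∑ j ∈ Finset.range l, gfib (l + 1) (i + l - j) + gfib (l + 1) i := by
    rw [gfib_eq_sum hk (by omega), Finset.sum_range_succ]
    exact congrArg₂ (· + ·) (Finset.sum_congr rfl fun j _ => congrArg _ (by omega)) (congrArg _ (by omega))
  rw [show i + (l + 1) = i + l + 1 by omega, hsucc, hself]
  ring

lemma gfib_add_self_le_two_pow (hk : 2 ≤ k) (j : ℕ) : gfib k (j + k) ≤ 2 ^ j := by
  induction j with
  | zero => simpa using gfib_le_one hk le_rfl
  | succ j ih =>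
    have := gfib_add_gfib hk j
    rw [show j + 1 + k = j + k + 1 by omega, pow_succ]
    omega

lemma gfib_le_two_pow (hk : 2 ≤ k) (i : ℕ) : gfib k i ≤ 2 ^ (i - k) := by
  rcases le_or_gt i k with hi | hi
  · exact (gfib_le_one hk hi).trans Nat.one_le_two_pow
  · simpa [Nat.sub_add_cancel hi.le] using gfib_add_self_le_two_pow hk (i - k)

lemma gfib_add_self_eq_two_pow (hk : 2 ≤ k) {j : ℕ} (hj : j < k) : gfib k (j + k) = 2 ^ j := by
  induction j with
  | zero => simpa using gfib_self hk
  | succ j ih =>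
    have := gfib_add_gfib hk j
    rw [gfib_of_lt (i := j) (by omega), ih (by omega)] at this
    rw [show j + 1 + k = j + k + 1 by omega, pow_succ]
    omega

end gfib

section genFib

variable {k : ℕ}

lemma genFib_le_two_pow (hk : 2 ≤ k) (n : ℕ) : genFib k n ≤ 2 ^ (n - 2) :=
  (gfib_le_two_pow hk _).trans_eq (by congr 1; omega)

lemma genFib_eq_two_pow_sub_one (hk : 2 ≤ k) : genFib k (k + 1) = 2 ^ (k - 1) := by
  rw [genFib, show k + 1 + k - 2 = k - 1 + k by omega, gfib_add_self_eq_two_pow hk (by omega)]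

lemma genFib_add_genFib (hk : 2 ≤ k) (n : ℕ) :
    genFib k (n + k + 1) + genFib k n = 2 * genFib k (n + k) := by
  have := gfib_add_gfib hk (n + k - 2)
  simp only [genFib]
  rwa [show n + k + 1 + k - 2 = n + k - 2 + k + 1 by omega,
    show n + k + k - 2 = n + k - 2 + k by omega]

lemma two_pow_le_genFib_add (hk : 2 ≤ k) (m : ℕ) :
    2 ^ (k - 1 + m) ≤ genFib k (k + 1 + m) + m * 2 ^ m := by
  induction m with
  | zero => simp [genFib_eq_two_pow_sub_one hk]
  | succ m ih =>
    have hrec : genFib k (k + 1 + m + 1) + genFib k (m + 1) = 2 * genFib k (k + 1 + m) := by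
      simpa only [show m + 1 + k + 1 = k + 1 + m + 1 by omega,
        show m + 1 + k = k + 1 + m by omega] using genFib_add_genFib hk (m + 1)
    have hsmall : genFib k (m + 1) ≤ 2 ^ m :=
      (genFib_le_two_pow hk _).trans (Nat.pow_le_pow_right two_pos (by omega))
    rw [← add_assoc, ← add_assoc, pow_succ, pow_succ]
    linarith

lemma abs_genFib_sub_two_pow_le (hk : 2 ≤ k) (m : ℕ) :
    |(genFib k (k + 1 + m) : ℝ) - 2 ^ (k - 1 + m)| ≤ m * 2 ^ m := by
  have hupper : (genFib k (k + 1 + m) : ℝ) ≤ 2 ^ (k - 1 + m) := by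
    exact_mod_cast (genFib_le_two_pow hk _).trans_eq (by congr 1; omega)
  have hlower : (2 : ℝ) ^ (k - 1 + m) ≤ genFib k (k + 1 + m) + m * 2 ^ m := by
    exact_mod_cast two_pow_le_genFib_add hk m
  rw [abs_sub_le_iff]
  constructor <;> nlinarith [pow_pos (two_pos (α := ℝ)) m]

end genFib

lemma natCast_mul_two_pow_lt {k m : ℕ} (hm : (m : ℝ) < 2 ^ ((k : ℝ) / 2)) :
    m * 2 ^ m < (2 : ℝ) ^ (k + m) / 2 ^ ((k : ℝ) / 2) := by
  have hA : (0 : ℝ) < 2 ^ ((k : ℝ) / 2) := by positivity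
  have hsq : (2 : ℝ) ^ ((k : ℝ) / 2) * 2 ^ ((k : ℝ) / 2) = 2 ^ k := by
    rw [← Real.rpow_add two_pos, add_halves, Real.rpow_natCast]
  rw [lt_div_iff₀ hA, pow_add, ← hsq]
  nlinarith [mul_lt_mul_of_pos_right hm (mul_pos hA (pow_pos two_pos m))]

/-- For integers `k ≥ 2` and `k + 2 ≤ n < 2^{k/2}`, one has
`|F_n^{(k)} - 2^{n-2}| < 12 · 2^{n-2} / 2^{k/2}`, equivalently
`|F_n^{(k)} / 2^{n-2} - 1| < 12 / 2^{k/2}`. -/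
theorem abs_genFib_sub_pow_lt (k n : ℕ) (hk : 2 ≤ k) (hn₁ : k + 2 ≤ n)
    (hn₂ : (n : ℝ) < 2 ^ ((k : ℝ) / 2)) :
    |(genFib k n : ℝ) - 2 ^ (n - 2)| < 12 * 2 ^ (n - 2) / 2 ^ ((k : ℝ) / 2) ∧
    |(genFib k n : ℝ) / 2 ^ (n - 2) - 1| < 12 / 2 ^ ((k : ℝ) / 2) := by
  obtain ⟨m, rfl⟩ : ∃ m, n = k + 1 + m := ⟨n - k - 1, by omega⟩
  rw [show k + 1 + m - 2 = k - 1 + m by omega]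
  have hP : (0 : ℝ) < 2 ^ (k - 1 + m) := by positivity
  have hm : (m : ℝ) < 2 ^ ((k : ℝ) / 2) := lt_of_le_of_lt (by norm_cast; omega) hn₂
  have hdev : |(genFib k (k + 1 + m) : ℝ) - 2 ^ (k - 1 + m)| <
      12 * 2 ^ (k - 1 + m) / 2 ^ ((k : ℝ) / 2) :=
    calc _ ≤ (m : ℝ) * 2 ^ m := abs_genFib_sub_two_pow_le hk m
      _ < 2 ^ (k + m) / 2 ^ ((k : ℝ) / 2) := natCast_mul_two_pow_lt hm
      _ = 2 * 2 ^ (k - 1 + m) / 2 ^ ((k : ℝ) / 2) := by rw [← pow_succ']; congr 2; omega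
      _ ≤ _ := by gcongr; norm_num
  refine ⟨hdev, ?_⟩
  rwa [div_sub_one hP.ne', abs_div, abs_of_pos hP, div_lt_iff₀ hP, div_mul_eq_mul_div]
end
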